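/- Let V, Y be topological vector spaces, μ a Borel probability measure on V, Υ : V → Y continuous linear, Υ̂ : Y → V continuous linear with Υ ∘ Υ̂ = id on a set of full Υ_*μ-measure. Set L := Υ̂ ∘ Υ, R := id − L, μ_L := L_* μ, μ_R := R_* μ. If μ equals the convolution μ_R * μ_L, then for every bounded measurable s : V → ℝ, ∫ s dμ = ∫_Y ∫_V s(Υ̂(y) + ζ) dμ_R(ζ) d(Υ_*μ)(y); i.e., the family y ↦ (τ_{Υ̂(y)})_* μ_R is a disintegration of μ with respect to Υ. -/

import Mathlib

open MeasureTheory in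
theorem convolution_disintegration {V Y : Type*}
    [AddCommGroup V] [Module ℝ V] [TopologicalSpace V] [IsTopologicalAddGroup V]
    [ContinuousSMul ℝ V] [MeasurableSpace V] [BorelSpace V] [SecondCountableTopology V]
    [AddCommGroup Y] [Module ℝ Y] [TopologicalSpace Y] [IsTopologicalAddGroup Y]
    [ContinuousSMul ℝ Y] [MeasurableSpace Y] [BorelSpace Y]
    (μ : Measure V) [IsProbabilityMeasure μ]
    (Υ : V →L[ℝ] Y) (Υhat : Y →L[ℝ] V)
    (hid : ∀ᵐ y ∂(μ.map Υ), Υ (Υhat y) = y)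
    (hconv : μ = ((μ.map (fun v => v - Υhat (Υ v))).prod
        (μ.map (fun v => Υhat (Υ v)))).map (fun p => p.1 + p.2)) :
    ∀ s : V → ℝ, Measurable s → (∃ C : ℝ, ∀ v, |s v| ≤ C) →
      ∫ v, s v ∂μ =
        ∫ y, (∫ ζ, s (Υhat y + ζ) ∂(μ.map (fun v => v - Υhat (Υ v)))) ∂(μ.map Υ) := by
  intro s hs hbdd
  obtain ⟨C, hC⟩ := hbdd
  have hΥ : Measurable Υ := Υ.continuous.measurable
  have hΥhat : Measurable Υhat := Υhat.continuous.measurable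
  have hL : Measurable fun v : V => Υhat (Υ v) := hΥhat.comp hΥ
  have hR : Measurable fun v : V => v - Υhat (Υ v) := measurable_id.sub hL
  set mR := μ.map (fun v => v - Υhat (Υ v)) with hmR
  set mL := μ.map (fun v => Υhat (Υ v)) with hmL
  have hPR : IsProbabilityMeasure mR := Measure.isProbabilityMeasure_map hR.aemeasurable
  have hPL : IsProbabilityMeasure mL := Measure.isProbabilityMeasure_map hL.aemeasurable
  have hsm : StronglyMeasurable s := hs.stronglyMeasurable
  have hmeas2 : StronglyMeasurable (fun p : V × V => s (p.1 + p.2)) :=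
    (hs.comp measurable_add).stronglyMeasurable
  have hint : Integrable (fun p : V × V => s (p.1 + p.2)) (mR.prod mL) := by
    refine ⟨hmeas2.aestronglyMeasurable, ?_⟩
    exact HasFiniteIntegral.of_bounded (C := C)
      (Filter.Eventually.of_forall fun p => by
        simpa [Real.norm_eq_abs] using hC (p.1 + p.2))
  conv_lhs => rw [hconv]
  rw [integral_map measurable_add.aemeasurable hsm.aestronglyMeasurable]
  rw [integral_prod_symm _ hint]
  have hmapmap : mL = (μ.map Υ).map Υhat := by
    rw [hmL, Measure.map_map hΥhat hΥ]; rfl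
  rw [hmapmap]
  rw [integral_map hΥhat.aemeasurable]
  · refine integral_congr_ae (Filter.Eventually.of_forall fun y => ?_)
    refine integral_congr_ae (Filter.Eventually.of_forall fun x => ?_)
    show s (x + Υhat y) = s (Υhat y + x)
    rw [add_comm]
  · exact (StronglyMeasurable.integral_prod_left (f := fun a b => s (a + b)) hmeas2).aestronglyMeasurable
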